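/- Let n ≥ 3, p ∈ [0,1]^n with p̄ = (1/n)Σ_i p_i > 0. Then ∫_0^1 Π_{i=3}^n (1 - p_i t) dt ≤ (n/(n-2))^{n-2} · (n/(n-1)) · 1/(n·p̄), and in particular this integral is strictly less than e^2/(n·p̄). -/

import Mathlib

/-!
By AM-GM, the product of the `n - 2` factors `1 - pᵢ t` (each in `[0, 1]`) is at most the
`(n - 2)`-th power of their mean, and adding back the two missing nonnegative factors bounds that
mean by `n (1 - p̄ t) / (n - 2)`. Integrating `(1 - p̄ t)^(n-2)` over `[0, 1]` gives at most
`1 / ((n - 1) p̄)`. For the constant, write `m = n - 2`: the quadratic lower bound for `exp` gives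
`1 + 2/m ≤ exp (2/m - 1/(m (m+1)))`, so `(1 + 2/m)^m ≤ exp (2 - 1/(m+1))`, and the saved
`1/(m+1)` exactly pays for the factor `(m+2)/(m+1) < exp (1/(m+1))`.
-/

open Finset Real

theorem prod_le_sum_div_card_pow {ι : Type*} {s : Finset ι} (hs : s.Nonempty) {z : ι → ℝ}
    (hz : ∀ i ∈ s, 0 ≤ z i) :
    ∏ i ∈ s, z i ≤ ((∑ i ∈ s, z i) / #s) ^ #s := by
  have hgm := geom_mean_le_arith_mean s (fun _ ↦ 1) z (fun _ _ ↦ zero_le_one)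
    (by simpa using hs.card_pos) hz
  simp only [rpow_one, sum_const, nsmul_eq_mul, mul_one, one_mul] at hgm
  calc ∏ i ∈ s, z i = ((∏ i ∈ s, z i) ^ (#s : ℝ)⁻¹) ^ #s :=
        (rpow_inv_natCast_pow (prod_nonneg hz) hs.card_ne_zero).symm
    _ ≤ ((∑ i ∈ s, z i) / #s) ^ #s := pow_le_pow_left₀ (rpow_nonneg (prod_nonneg hz) _) hgm _

theorem integral_one_sub_mul_pow_le {a : ℝ} (ha₀ : 0 < a) (ha₁ : a ≤ 1) (N : ℕ) :
    ∫ x in (0 : ℝ)..1, (1 - a * x) ^ N ≤ 1 / ((N + 1) * a) := by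
  rw [intervalIntegral.integral_comp_sub_mul (· ^ N) ha₀.ne', integral_pow, smul_eq_mul,
    mul_zero, sub_zero, mul_one, one_pow, inv_mul_eq_div, div_div]
  gcongr
  exact sub_le_self _ (pow_nonneg (sub_nonneg.2 ha₁) _)

theorem prod_one_sub_mul_le {ι : Type*} {s t : Finset ι} (hst : s ⊆ t) (hs : s.Nonempty)
    {p : ι → ℝ} (hp : ∀ i ∈ t, p i ∈ Set.Icc (0 : ℝ) 1) {a : ℝ} (ha : ∑ i ∈ t, p i = #t * a)
    {x : ℝ} (hx : x ∈ Set.Icc (0 : ℝ) 1) :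
    ∏ i ∈ s, (1 - p i * x) ≤ ((#t : ℝ) / #s) ^ #s * (1 - a * x) ^ #s := by
  have hnonneg : ∀ i ∈ t, 0 ≤ 1 - p i * x := fun i hi ↦
    sub_nonneg.2 (mul_le_one₀ (hp i hi).2 hx.1 hx.2)
  calc ∏ i ∈ s, (1 - p i * x)
      ≤ ((∑ i ∈ s, (1 - p i * x)) / #s) ^ #s :=
        prod_le_sum_div_card_pow hs fun i hi ↦ hnonneg i (hst hi)
    _ ≤ ((∑ i ∈ t, (1 - p i * x)) / #s) ^ #s := by
        have hsub := sum_le_sum_of_subset_of_nonneg hst fun i hi _ ↦ hnonneg i hi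
        have hpos := sum_nonneg fun i hi ↦ hnonneg i (hst hi)
        gcongr
    _ = ((#t : ℝ) / #s) ^ #s * (1 - a * x) ^ #s := by
        rw [← mul_pow, sum_sub_distrib, ← sum_mul, ha, sum_const, nsmul_one]
        ring

theorem integral_prod_one_sub_mul_le {ι : Type*} {s t : Finset ι} (hst : s ⊆ t)
    (hs : s.Nonempty) {p : ι → ℝ} (hp : ∀ i ∈ t, p i ∈ Set.Icc (0 : ℝ) 1) {a : ℝ}
    (ha : ∑ i ∈ t, p i = #t * a) (ha₀ : 0 < a) :
    ∫ x in (0 : ℝ)..1, ∏ i ∈ s, (1 - p i * x) ≤ ((#t : ℝ) / #s) ^ #s / ((#s + 1) * a) := by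
  have ht : (0 : ℝ) < #t := by exact_mod_cast (hs.mono hst).card_pos
  have ha₁ : a ≤ 1 := by
    have hsum : ∑ i ∈ t, p i ≤ #t := by
      simpa using sum_le_sum fun i hi ↦ (hp i hi).2
    rw [ha] at hsum
    exact (mul_le_iff_le_one_right ht).1 (by simpa using hsum)
  calc ∫ x in (0 : ℝ)..1, ∏ i ∈ s, (1 - p i * x)
      ≤ ∫ x in (0 : ℝ)..1, ((#t : ℝ) / #s) ^ #s * (1 - a * x) ^ #s :=
        intervalIntegral.integral_mono_on zero_le_one
          ((by fun_prop : Continuous _).intervalIntegrable _ _)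
          ((by fun_prop : Continuous _).intervalIntegrable _ _)
          fun x hx ↦ prod_one_sub_mul_le hst hs hp ha hx
    _ ≤ ((#t : ℝ) / #s) ^ #s * (1 / ((#s + 1) * a)) := by
        rw [intervalIntegral.integral_const_mul]
        gcongr
        exact integral_one_sub_mul_pow_le ha₀ ha₁ _
    _ = ((#t : ℝ) / #s) ^ #s / ((#s + 1) * a) := mul_one_div _ _

theorem one_add_two_div_le_exp {x : ℝ} (hx : 0 < x) :
    1 + 2 / x ≤ exp (2 / x - 1 / (x * (x + 1))) := by
  have hy : 2 / x - 1 / (x * (x + 1)) = (2 * x + 1) / (x * (x + 1)) := by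
    field_simp; ring
  rw [hy]
  refine le_trans ?_ (quadratic_le_exp_of_nonneg (by positivity))
  rw [div_pow, ← sub_nonneg]
  have : 1 + (2 * x + 1) / (x * (x + 1)) + (2 * x + 1) ^ 2 / (x * (x + 1)) ^ 2 / 2 - (1 + 2 / x)
      = (2 * x ^ 2 + 2 * x + 1) / (2 * (x * (x + 1)) ^ 2) := by
    field_simp; ring
  rw [this]
  positivity

theorem div_sub_two_pow_mul_div_sub_one_lt_exp_two {n : ℕ} (hn : 3 ≤ n) :
    ((n : ℝ) / (n - 2)) ^ (n - 2) * ((n : ℝ) / (n - 1)) < exp 2 := by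
  obtain ⟨m, rfl⟩ : ∃ m, n = m + 2 := ⟨n - 2, by omega⟩
  have hm : (0 : ℝ) < m := by exact_mod_cast (by omega : 0 < m)
  rw [Nat.add_sub_cancel]
  push_cast
  rw [add_sub_cancel_right, (by ring : (m : ℝ) + 2 - 1 = m + 1)]
  have hpow : (((m : ℝ) + 2) / m) ^ m ≤ exp (2 - 1 / (m + 1)) :=
    calc (((m : ℝ) + 2) / m) ^ m = (1 + 2 / m) ^ m := by rw [add_div, div_self hm.ne']
      _ ≤ exp (2 / m - 1 / (m * (m + 1))) ^ m := by
          gcongr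
          exact one_add_two_div_le_exp hm
      _ = exp (2 - 1 / (m + 1)) := by
          rw [← exp_nat_mul]; congr 1; field_simp
  have hfactor : ((m : ℝ) + 2) / (m + 1) < exp (1 / (m + 1)) := by
    convert add_one_lt_exp (one_div_pos.2 (by linarith : (0 : ℝ) < m + 1)).ne' using 1
    field_simp; ring
  calc (((m : ℝ) + 2) / m) ^ m * (((m : ℝ) + 2) / (m + 1))
      < exp (2 - 1 / (m + 1)) * exp (1 / (m + 1)) :=
        mul_lt_mul' hpow hfactor (by positivity) (exp_pos _)
    _ = exp 2 := by rw [← exp_add, sub_add_cancel]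

/-- For n ≥ 3 and p ∈ [0,1]^n with positive mean p̄,
∫_0^1 ∏_{i=3}^n (1-pᵢt) dt ≤ (n/(n-2))^{n-2}·(n/(n-1))·(1/(n·p̄)),
and in particular the integral is strictly less than e²/(n·p̄). -/
theorem integral_pair_excluded_bound (n : ℕ) (hn : 3 ≤ n) (p : Fin n → ℝ)
    (hp : ∀ i, p i ∈ Set.Icc (0:ℝ) 1)
    (pbar : ℝ) (hmean : pbar = (1 / (n:ℝ)) * ∑ i, p i) (hpos : 0 < pbar) :
    (∫ t in (0:ℝ)..1, ∏ i ∈ Finset.univ.filter (fun i : Fin n => 2 ≤ i.val), (1 - p i * t))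
      ≤ ((n:ℝ) / ((n:ℝ) - 2)) ^ (n - 2) * ((n:ℝ) / ((n:ℝ) - 1)) * (1 / ((n:ℝ) * pbar))
    ∧ (∫ t in (0:ℝ)..1, ∏ i ∈ Finset.univ.filter (fun i : Fin n => 2 ≤ i.val), (1 - p i * t))
      < Real.exp 2 / ((n:ℝ) * pbar) := by
  have hcard : #(univ.filter fun i : Fin n ↦ 2 ≤ i.val) = n - 2 := by
    have h := card_filter_add_card_filter_not (s := univ) fun i : Fin n ↦ 2 ≤ i.val
    simp only [not_le, Fin.card_filter_val_lt, card_univ, Fintype.card_fin] at h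
    omega
  have hsum : ∑ i, p i = #(univ : Finset (Fin n)) * pbar := by
    rw [card_univ, Fintype.card_fin, hmean]
    field_simp
  have key := integral_prod_one_sub_mul_le (filter_subset (fun i : Fin n ↦ 2 ≤ i.val) univ)
    (card_pos.1 (by omega)) (fun i _ ↦ hp i) hsum hpos
  have hn₃ : (3 : ℝ) ≤ n := by exact_mod_cast hn
  have hbound : ((n : ℝ) / (n - 2)) ^ (n - 2) / ((n - 2 + 1) * pbar)
      = ((n : ℝ) / (n - 2)) ^ (n - 2) * (n / (n - 1)) * (1 / (n * pbar)) := by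
    rw [show (n : ℝ) - 2 + 1 = n - 1 by ring]
    have : (n : ℝ) - 2 ≠ 0 := by linarith
    have : (n : ℝ) - 1 ≠ 0 := by linarith
    field_simp
  rw [hcard, card_univ, Fintype.card_fin, Nat.cast_sub (by omega), Nat.cast_ofNat, hbound] at key
  refine ⟨key, key.trans_lt ?_⟩
  rw [mul_one_div]
  gcongr
  exact div_sub_two_pow_mul_div_sub_one_lt_exp_two hn
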